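/- arXiv:2504.11211 — 2 statements merged into one kernel-verified Lean document; each statement's English description precedes it below -/
import Mathlib

section
/- Let $A$ be a real symmetric $2n \times 2n$ matrix, so that $JA$ is Hamiltonian, where $J$ is the standard symplectic matrix, with $\sigma(JA) \cap i\mathbb{R} = \emptyset$, and let $V^+(JA)$ denote the sum of generalized eigenspaces of $JA$ associated with eigenvalues of positive real part. Then for every $\xi \in V^+(JA)$, the quadratic form value $\omega(JA\xi, \xi) \ge 0$, where $\omega(z_1,z_2) = \langle Jz_1, z_2\rangle$. In particular, if $\Lambda \subset \mathbb{R}^{2n}$ is a subspace on which $\omega(JA\xi,\xi) < 0$ for all nonzero $\xi$, then $V^+(JA) \cap \Lambda = \{0\}$. -/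
open Matrix Filter

section Aux

attribute [local instance] Matrix.linftyOpNormedAddCommGroup Matrix.linftyOpNormedRing
  Matrix.linftyOpNormedAlgebra

variable {N : Type*} [Fintype N] [DecidableEq N]

/-- derivative of the matrix flow applied to a vector -/
lemma aux_hasDerivAt (B : Matrix N N ℝ) (ξ : N → ℝ) (t : ℝ) :
    HasDerivAt (fun t : ℝ => (NormedSpace.exp (t • B)).mulVec ξ)
      (B.mulVec ((NormedSpace.exp (t • B)).mulVec ξ)) t := by
  have h := hasDerivAt_exp_smul_const' (𝕂 := ℝ) B t
  -- compose with the continuous linear map M ↦ M.mulVec ξ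
  let L : Matrix N N ℝ →ₗ[ℝ] (N → ℝ) :=
    { toFun := fun M => M.mulVec ξ
      map_add' := fun M M' => Matrix.add_mulVec M M' ξ
      map_smul' := fun c M => Matrix.smul_mulVec c M ξ }
  have hL : Continuous L := LinearMap.continuous_of_finiteDimensional L
  have := (L.toContinuousLinearMap.hasFDerivAt.comp_hasDerivAt t h)
  convert this using 1
  show B.mulVec ((NormedSpace.exp (t • B)).mulVec ξ) = (B * NormedSpace.exp (t • B)).mulVec ξ
  rw [Matrix.mulVec_mulVec]
  all_goals rfl

lemma aux_exp_zero_mulVec (B : Matrix N N ℝ) (ξ : N → ℝ) :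
    (NormedSpace.exp ((0 : ℝ) • B)).mulVec ξ = ξ := by
  rw [zero_smul, NormedSpace.exp_zero, Matrix.one_mulVec]

lemma aux_dot (M : Matrix N N ℝ) (v w : N → ℝ) :
    (M.mulVec v) ⬝ᵥ w = v ⬝ᵥ (Mᵀ.mulVec w) := by
  rw [Matrix.dotProduct_mulVec, Matrix.vecMul_transpose]

end Aux

/-- for a hyperbolic Hamiltonian matrix `JA` (with `A` symmetric and
`σ(JA) ∩ iℝ = ∅`), the quadratic form `ξ ↦ ω(JAξ, ξ)` is nonnegative on the positive
(unstable) spectral subspace `V⁺(JA) = {ξ : e^{tJA}ξ → 0 as t → -∞}`; consequently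
`V⁺(JA)` meets trivially any subspace on which the form is negative definite. -/
theorem stmt_5 (n : ℕ)
    (J : Matrix (Fin n ⊕ Fin n) (Fin n ⊕ Fin n) ℝ)
    (hJ : J = Matrix.fromBlocks 0 (-1) 1 0)
    (A : Matrix (Fin n ⊕ Fin n) (Fin n ⊕ Fin n) ℝ) (hA : A.IsSymm)
    (hhyp : ∀ (a : ℝ) (z : (Fin n ⊕ Fin n) → ℂ),
      ((J * A).map (Complex.ofReal)).mulVec z = ((a : ℂ) * Complex.I) • z → z = 0)
    (Vplus : Set ((Fin n ⊕ Fin n) → ℝ))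
    (hVplus : Vplus = {ξ | Tendsto (fun t : ℝ => (NormedSpace.exp (t • (J * A))).mulVec ξ)
      atBot (nhds 0)}) :
    (∀ ξ ∈ Vplus, 0 ≤ (J.mulVec ((J * A).mulVec ξ)) ⬝ᵥ ξ) ∧
      ∀ Λ : Submodule ℝ ((Fin n ⊕ Fin n) → ℝ),
        (∀ ξ ∈ Λ, ξ ≠ 0 → (J.mulVec ((J * A).mulVec ξ)) ⬝ᵥ ξ < 0) →
        ∀ ξ ∈ Vplus, ξ ∈ Λ → ξ = 0 := by
  set B := J * A with hB
  -- J² = -1 and Jᵀ = -J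
  have hJJ : J * J = -1 := by
    rw [hJ, Matrix.fromBlocks_multiply]
    simp [← Matrix.fromBlocks_one, Matrix.fromBlocks_neg]
  have hJt : Jᵀ = -J := by
    rw [hJ, Matrix.fromBlocks_transpose]
    simp [Matrix.fromBlocks_neg]
  -- the form equals -(A ξ) ⬝ᵥ ξ
  have hform : ∀ ξ, (J.mulVec ((J * A).mulVec ξ)) ⬝ᵥ ξ = -(ξ ⬝ᵥ A.mulVec ξ) := by
    intro ξ
    rw [Matrix.mulVec_mulVec, ← Matrix.mul_assoc, hJJ, Matrix.neg_mul, Matrix.one_mul,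
      Matrix.neg_mulVec, neg_dotProduct, dotProduct_comm]
  have key : ∀ ξ ∈ Vplus, ξ ⬝ᵥ A.mulVec ξ = 0 := by
    intro ξ hξ
    rw [hVplus] at hξ
    set x : ℝ → (Fin n ⊕ Fin n) → ℝ := fun t => (NormedSpace.exp (t • B)).mulVec ξ with hx
    set f : ℝ → ℝ := fun t => x t ⬝ᵥ A.mulVec (x t) with hf
    -- f has derivative 0 everywhere
    have hderiv : ∀ t, HasDerivAt f 0 t := by
      intro t
      have hxd : HasDerivAt x (B.mulVec (x t)) t := aux_hasDerivAt B ξ t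
      have hxi : ∀ i, HasDerivAt (fun t => x t i) (B.mulVec (x t) i) t :=
        fun i => (hasDerivAt_pi.mp hxd) i
      have hyd : HasDerivAt (fun t => A.mulVec (x t)) (A.mulVec (B.mulVec (x t))) t := by
        have hL : Continuous (A.mulVecLin : ((Fin n ⊕ Fin n) → ℝ) →ₗ[ℝ] _) :=
          LinearMap.continuous_of_finiteDimensional _
        exact (A.mulVecLin.toContinuousLinearMap.hasFDerivAt.comp_hasDerivAt t hxd)
      have hyi : ∀ i, HasDerivAt (fun t => A.mulVec (x t) i) (A.mulVec (B.mulVec (x t)) i) t :=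
        fun i => (hasDerivAt_pi.mp hyd) i
      have hsum : HasDerivAt f
          (∑ i, (B.mulVec (x t) i * A.mulVec (x t) i + x t i * A.mulVec (B.mulVec (x t)) i)) t := by
        have : HasDerivAt (fun t => ∑ i, x t i * A.mulVec (x t) i)
            (∑ i, (B.mulVec (x t) i * A.mulVec (x t) i + x t i * A.mulVec (B.mulVec (x t)) i)) t :=
          HasDerivAt.fun_sum (fun i _ => (hxi i).mul (hyi i))
        exact this
      convert hsum using 1
      have : (∑ i, (B.mulVec (x t) i * A.mulVec (x t) i + x t i * A.mulVec (B.mulVec (x t)) i))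
          = (B.mulVec (x t)) ⬝ᵥ A.mulVec (x t) + x t ⬝ᵥ A.mulVec (B.mulVec (x t)) := by
        rw [Finset.sum_add_distrib]; rfl
      rw [this]
      -- algebraic identity: Bᵀ A + A B = 0 since B = J A, Aᵀ = A, Jᵀ = -J
      have h1 : (B.mulVec (x t)) ⬝ᵥ A.mulVec (x t) = x t ⬝ᵥ (Bᵀ * A).mulVec (x t) := by
        rw [aux_dot B (x t) (A.mulVec (x t)), Matrix.mulVec_mulVec]
      have h2 : x t ⬝ᵥ A.mulVec (B.mulVec (x t)) = x t ⬝ᵥ (A * B).mulVec (x t) := by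
        rw [Matrix.mulVec_mulVec]
      rw [h1, h2, ← dotProduct_add, ← Matrix.add_mulVec]
      have : Bᵀ * A + A * B = 0 := by
        rw [hB, Matrix.transpose_mul, hA.eq, hJt]
        noncomm_ring
      rw [this, Matrix.zero_mulVec, dotProduct_zero]
    -- hence f is constant
    have hconst : ∀ t, f t = f 0 := by
      intro t
      exact is_const_of_deriv_eq_zero (fun s => (hderiv s).differentiableAt)
        (fun s => (hderiv s).deriv) t 0
    -- the limit of f at -∞ is 0
    have hcont : Continuous (fun v : (Fin n ⊕ Fin n) → ℝ => v ⬝ᵥ A.mulVec v) := by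
      continuity
    have hlim : Tendsto f atBot (nhds ((0 : (Fin n ⊕ Fin n) → ℝ) ⬝ᵥ A.mulVec 0)) :=
      (hcont.tendsto 0).comp hξ
    rw [zero_dotProduct] at hlim
    have hlim' : Tendsto f atBot (nhds (f 0)) := by
      have : f = fun _ => f 0 := funext hconst
      rw [this]; exact tendsto_const_nhds
    have hf0 : f 0 = 0 := tendsto_nhds_unique hlim' hlim
    have hf0' : x 0 ⬝ᵥ A.mulVec (x 0) = 0 := hf0
    have hx0 : x 0 = ξ := aux_exp_zero_mulVec B ξ
    rw [hx0] at hf0'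
    exact hf0'
  constructor
  · intro ξ hξ
    rw [hform, key ξ hξ, neg_zero]
  · intro Λ hΛ ξ hξV hξΛ
    by_contra hne
    have h1 := hΛ ξ hξΛ hne
    rw [hform, key ξ hξV, neg_zero] at h1
    exact lt_irrefl 0 h1
end

section
/- Let $G = \begin{pmatrix} G_1 & G_3 \\ G_3^* & G_2 \end{pmatrix}$ be a self-adjoint operator (or finite-dimensional symmetric block matrix) on $E = E_+ \oplus E_-$, with $-G_2 > 0$ (positive definite) and $\lambda \ge 0$. Suppose $(\phi_+, \phi_-) \neq 0$ satisfies $G_1\phi_+ + G_3\phi_- = -\lambda\phi_+$ and $G_3^*\phi_+ + G_2\phi_- = \lambda\phi_-$. If moreover $I > G_3(-G_2)^{-2}G_3^*$ (i.e. $I - G_3(-G_2)^{-2}G_3^*$ is positive definite), then $\|\phi_+\|^2 - \|\phi_-\|^2 > 0$. In particular $\phi_+ \neq 0$. -/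
/-!
Write `B = -G₂ > 0`. The second equation says `G₃ᵀφ₊ = (λ + B)φ₋`, so
`B⁻¹G₃ᵀφ₊ = φ₋ + λB⁻¹φ₋`; since `⟪φ₋, B⁻¹φ₋⟫ ≥ 0` and `λ ≥ 0`, this gives
`‖φ₋‖² ≤ ‖B⁻¹G₃ᵀφ₊‖² = ⟪φ₊, G₃B⁻²G₃ᵀφ₊⟫`. Hence `φ₊ = 0` would force `φ₋ = 0`, and for
`φ₊ ≠ 0` the hypothesis `I - G₃B⁻²G₃ᵀ > 0` makes the right-hand side smaller than `‖φ₊‖²`.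
-/

open Matrix

namespace Matrix

variable {n m : Type*} [Fintype n] [Fintype m]

theorem mulVec_dotProduct_mulVec_self (A : Matrix m n ℝ) (x : n → ℝ) :
    (A *ᵥ x) ⬝ᵥ (A *ᵥ x) = x ⬝ᵥ (Aᵀ * A) *ᵥ x := by
  rw [← mulVec_mulVec, dotProduct_mulVec x Aᵀ, vecMul_transpose]

theorem IsSymm.mulVec_dotProduct_mulVec_self {S : Matrix n n ℝ} (hS : S.IsSymm)
    (C : Matrix m n ℝ) (x : m → ℝ) :
    (S *ᵥ Cᵀ *ᵥ x) ⬝ᵥ (S *ᵥ Cᵀ *ᵥ x) = x ⬝ᵥ (C * (S * S) * Cᵀ) *ᵥ x := by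
  rw [mulVec_mulVec, Matrix.mulVec_dotProduct_mulVec_self, transpose_mul, transpose_transpose,
    hS.eq, Matrix.mul_assoc, Matrix.mul_assoc, Matrix.mul_assoc]

theorem PosDef.dotProduct_self_le_of_eq_smul_add_mulVec [DecidableEq n] {B : Matrix n n ℝ}
    (hB : B.PosDef) {lam : ℝ} (hlam : 0 ≤ lam) {y w : n → ℝ} (h : w = lam • y + B *ᵥ y) :
    y ⬝ᵥ y ≤ (B⁻¹ *ᵥ w) ⬝ᵥ (B⁻¹ *ᵥ w) := by
  set z := B⁻¹ *ᵥ y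
  have hw : B⁻¹ *ᵥ w = y + lam • z := by
    rw [h, mulVec_add, mulVec_smul, mulVec_mulVec,
      nonsing_inv_mul _ ((isUnit_iff_isUnit_det B).mp hB.isUnit), one_mulVec, add_comm]
  have hyz : 0 ≤ y ⬝ᵥ z := by
    simpa using hB.inv.posSemidef.dotProduct_mulVec_nonneg y
  have hzz : 0 ≤ z ⬝ᵥ z := by simpa using dotProduct_star_self_nonneg z
  have hexpand : (y + lam • z) ⬝ᵥ (y + lam • z) =
      y ⬝ᵥ y + 2 * lam * (y ⬝ᵥ z) + lam ^ 2 * (z ⬝ᵥ z) := by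
    simp only [dotProduct_add, add_dotProduct, dotProduct_smul, smul_dotProduct, smul_eq_mul,
      dotProduct_comm z y]
    ring
  rw [hw, hexpand]
  nlinarith [mul_nonneg hlam hyz, mul_nonneg (sq_nonneg lam) hzz]

end Matrix

theorem stmt_19_general (p q : ℕ)
    (G₂ : Matrix (Fin q) (Fin q) ℝ)
    (G₃ : Matrix (Fin p) (Fin q) ℝ)
    (hG₂neg : Matrix.PosDef (-G₂))
    (hcontr : Matrix.PosDef ((1 : Matrix (Fin p) (Fin p) ℝ)
      - G₃ * ((-G₂)⁻¹ * (-G₂)⁻¹) * G₃ᵀ))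
    (lam : ℝ) (hlam : 0 ≤ lam)
    (φp : Fin p → ℝ) (φm : Fin q → ℝ) (hne : ¬ (φp = 0 ∧ φm = 0))
    (heq2 : G₃ᵀ.mulVec φp + G₂.mulVec φm = lam • φm) :
    0 < φp ⬝ᵥ φp - φm ⬝ᵥ φm ∧ φp ≠ 0 := by
  have hφm : G₃ᵀ *ᵥ φp = lam • φm + (-G₂) *ᵥ φm := by
    rw [neg_mulVec, ← heq2, add_neg_cancel_right]
  have hle : φm ⬝ᵥ φm ≤ φp ⬝ᵥ (G₃ * ((-G₂)⁻¹ * (-G₂)⁻¹) * G₃ᵀ) *ᵥ φp := by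
    rw [← (isHermitian_iff_isSymm.mp hG₂neg.inv.isHermitian).mulVec_dotProduct_mulVec_self]
    exact hG₂neg.dotProduct_self_le_of_eq_smul_add_mulVec hlam hφm
  have hφp : φp ≠ 0 := by
    rintro rfl
    refine hne ⟨rfl, dotProduct_self_eq_zero.mp (le_antisymm (by simpa using hle) ?_)⟩
    simpa using dotProduct_star_self_nonneg φm
  have hquad := hcontr.dotProduct_mulVec_pos hφp
  rw [star_trivial, sub_mulVec, one_mulVec, dotProduct_sub] at hquad
  exact ⟨by linarith, hφp⟩

/-- finite-dimensional version: for a symmetric block matrix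
`G = [[G₁, G₃], [G₃ᵀ, G₂]]` with `-G₂ > 0` and `I - G₃(-G₂)⁻²G₃ᵀ > 0`, any nonzero
solution of `G₁φ₊ + G₃φ₋ = -λφ₊`, `G₃ᵀφ₊ + G₂φ₋ = λφ₋` with `λ ≥ 0` satisfies
`‖φ₊‖² - ‖φ₋‖² > 0`; in particular `φ₊ ≠ 0`. -/
theorem stmt_19 (p q : ℕ)
    (G₁ : Matrix (Fin p) (Fin p) ℝ) (hG₁ : G₁.IsSymm)
    (G₂ : Matrix (Fin q) (Fin q) ℝ) (hG₂ : G₂.IsSymm)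
    (G₃ : Matrix (Fin p) (Fin q) ℝ)
    (hG₂neg : Matrix.PosDef (-G₂))
    (hcontr : Matrix.PosDef ((1 : Matrix (Fin p) (Fin p) ℝ)
      - G₃ * ((-G₂)⁻¹ * (-G₂)⁻¹) * G₃ᵀ))
    (lam : ℝ) (hlam : 0 ≤ lam)
    (φp : Fin p → ℝ) (φm : Fin q → ℝ) (hne : ¬ (φp = 0 ∧ φm = 0))
    (heq1 : G₁.mulVec φp + G₃.mulVec φm = (-lam) • φp)
    (heq2 : G₃ᵀ.mulVec φp + G₂.mulVec φm = lam • φm) :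
    0 < φp ⬝ᵥ φp - φm ⬝ᵥ φm ∧ φp ≠ 0 :=
  stmt_19_general p q G₂ G₃ hG₂neg hcontr lam hlam φp φm hne heq2
end
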